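/- (Annihilation formula) For integers n, k with n ≥ k+2, ∑_{l=0}^{k} S_{n-k-1}(n-1, n-l-1) · c_{n-l}^{(-k)} = 0, where S_r denotes r-Stirling numbers of the second kind and c_m^{(-k)} the poly-Cauchy numbers of the first kind with negative index. -/

import Mathlib

open Finset

/-- Unsigned Stirling numbers of the first kind. -/
def stirling1 : ℕ → ℕ → ℕ
  | 0, 0 => 1
  | 0, _ + 1 => 0
  | _ + 1, 0 => 0
  | n + 1, k + 1 => n * stirling1 n (k + 1) + stirling1 n k

/-- Stirling numbers of the second kind. -/
def stirling2 : ℕ → ℕ → ℕ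
  | 0, 0 => 1
  | 0, _ + 1 => 0
  | _ + 1, 0 => 0
  | n + 1, k + 1 => (k + 1) * stirling2 n (k + 1) + stirling2 n k

/-- Unsigned r-Stirling numbers of the first kind. -/
def rStirling1 (r : ℕ) : ℕ → ℕ → ℕ
  | 0, m => if r = 0 ∧ m = 0 then 1 else 0
  | n + 1, m =>
    if n + 1 < r then 0
    else if n + 1 = r then (if m = r then 1 else 0)
    else n * rStirling1 r n m + (match m with | 0 => 0 | m' + 1 => rStirling1 r n m')

/-- r-Stirling numbers of the second kind. -/
def rStirling2 (r : ℕ) : ℕ → ℕ → ℕ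
  | 0, m => if r = 0 ∧ m = 0 then 1 else 0
  | n + 1, m =>
    if n + 1 < r then 0
    else if n + 1 = r then (if m = r then 1 else 0)
    else m * rStirling2 r n m + (match m with | 0 => 0 | m' + 1 => rStirling2 r n m')

/-- Poly-Cauchy numbers of the first kind `c_n^{(k)}`. -/
noncomputable def polyCauchy (k : ℤ) (n : ℕ) : ℝ :=
  ∑ ℓ ∈ range (n + 1), (-1 : ℝ) ^ (n - ℓ) * stirling1 n ℓ / ((ℓ : ℝ) + 1) ^ k

/-- Poly-Cauchy numbers of the second kind `ĉ_n^{(k)}`. -/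
noncomputable def polyCauchy2 (k : ℤ) (n : ℕ) : ℝ :=
  (-1 : ℝ) ^ n * ∑ ℓ ∈ range (n + 1), (stirling1 n ℓ : ℝ) / ((ℓ : ℝ) + 1) ^ k

/-- Poly-Cauchy polynomials of the first kind `c_n^{(k)}(z)`. -/
noncomputable def polyCauchyPoly (k : ℤ) (n : ℕ) (z : ℝ) : ℝ :=
  ∑ m ∈ range (n + 1), (stirling1 n m : ℝ) * (-1 : ℝ) ^ (n - m) *
    ∑ i ∈ range (m + 1), (m.choose i : ℝ) * z ^ (m - i) / ((i : ℝ) + 1) ^ k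

/-- Shifted poly-Cauchy numbers of the first kind `c_{n,α}^{(k)}`. -/
noncomputable def shiftedPolyCauchy (k : ℤ) (n : ℕ) (α : ℝ) : ℝ :=
  ∑ m ∈ range (n + 1), (stirling1 n m : ℝ) * (-1 : ℝ) ^ (n - m) / ((m : ℝ) + α) ^ k

/-- Shifted poly-Cauchy numbers of the second kind `ĉ_{n,α}^{(k)}`. -/
noncomputable def shiftedPolyCauchy2 (k : ℤ) (n : ℕ) (α : ℝ) : ℝ :=
  (-1 : ℝ) ^ n * ∑ m ∈ range (n + 1), (stirling1 n m : ℝ) / ((m : ℝ) + α) ^ k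

/-! Write `θ = (d/dx) ∘ x` (`derivativeMulX`). Since `θ^k x^ℓ = (ℓ+1)^k x^ℓ`, the number
`c_m^{(-k)}` is the value at `1` of `θ^k` applied to the falling factorial `(x)_m`. Broder's identity
`∑_m S_r(r+j, m) (x)_m = (x)_r x^j`, composed with `x ↦ x - 1` and multiplied by `x`, turns the
sum into the value at `1` of `θ^k ((x)_{r+1} (x-1)^k)` with `r = n-k-1 ≥ 1`. As `(x)_{r+1}`
vanishes at `1`, this polynomial is divisible by `(x-1)^{k+1}`; each application of `θ` costs at
most one factor `x - 1`, so the result still vanishes at `1`. -/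

open Polynomial

theorem stirling1_eq_stirlingFirst : stirling1 = Nat.stirlingFirst := by
  funext n k
  induction n generalizing k with
  | zero => cases k <;> rfl
  | succ n ih =>
    cases k with
    | zero => rfl
    | succ k => rw [stirling1, Nat.stirlingFirst_succ_succ, ih, ih]

section rStirling2

variable {r n m : ℕ}

theorem rStirling2_eq_zero_of_left_lt (h : n < r) : rStirling2 r n m = 0 := by
  cases n with
  | zero => simp [rStirling2, h.ne']
  | succ n => simp [rStirling2, h]

theorem rStirling2_self : rStirling2 r r m = if m = r then 1 else 0 := by
  cases r with
  | zero => simp [rStirling2]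
  | succ r => simp [rStirling2]

theorem rStirling2_succ_zero (h : r ≤ n) : rStirling2 r (n + 1) 0 = 0 := by
  simp [rStirling2, Nat.not_lt.mpr (Nat.le_succ_of_le h), (Nat.lt_succ_of_le h).ne']

theorem rStirling2_succ_succ (h : r ≤ n) :
    rStirling2 r (n + 1) (m + 1) = (m + 1) * rStirling2 r n (m + 1) + rStirling2 r n m := by
  simp [rStirling2, Nat.not_lt.mpr (Nat.le_succ_of_le h), (Nat.lt_succ_of_le h).ne']

theorem rStirling2_eq_zero_of_lt (h : n < m) : rStirling2 r n m = 0 := by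
  rcases lt_or_ge n r with hn | hn
  · exact rStirling2_eq_zero_of_left_lt hn
  induction n, hn using Nat.le_induction generalizing m with
  | base => simp [rStirling2_self, h.ne']
  | succ n hrn ih =>
    obtain ⟨m, rfl⟩ := Nat.exists_eq_add_one_of_ne_zero (by omega : m ≠ 0)
    rw [rStirling2_succ_succ hrn, ih (by omega), ih (by omega), mul_zero]

theorem rStirling2_eq_zero_of_right_lt (h : m < r) : rStirling2 r n m = 0 := by
  rcases lt_or_ge n r with hn | hn
  · exact rStirling2_eq_zero_of_left_lt hn
  induction n, hn using Nat.le_induction generalizing m with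
  | base => simp [rStirling2_self, h.ne]
  | succ n hrn ih =>
    cases m with
    | zero => exact rStirling2_succ_zero hrn
    | succ m => rw [rStirling2_succ_succ hrn, ih (by omega), ih (by omega), mul_zero]

end rStirling2

section descPochhammer

variable {R : Type*} [CommRing R]

theorem coeff_descPochhammer (m ℓ : ℕ) :
    (descPochhammer R m).coeff ℓ = (-1) ^ (m - ℓ) * (Nat.stirlingFirst m ℓ : R) := by
  induction m generalizing ℓ with
  | zero => cases ℓ <;> simp [coeff_one]
  | succ m ih =>
    cases ℓ with
    | zero => simp [coeff_zero_eq_eval_zero]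
    | succ ℓ =>
      rw [descPochhammer_succ_right, ← C_eq_natCast, coeff_mul_X_sub_C, ih, ih,
        Nat.stirlingFirst_succ_succ]
      rcases lt_or_ge ℓ m with hℓ | hℓ
      · rw [show m - ℓ = m - (ℓ + 1) + 1 by omega, show m + 1 - (ℓ + 1) = m - (ℓ + 1) + 1 by omega]
        push_cast
        ring
      · rw [Nat.stirlingFirst_eq_zero_of_lt (by omega : m < ℓ + 1),
          show m + 1 - (ℓ + 1) = m - ℓ by omega]
        push_cast
        ring

theorem sum_rStirling2_smul_descPochhammer (r j : ℕ) :
    ∑ m ∈ range (r + j + 1), (rStirling2 r (r + j) m : R) • descPochhammer R m =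
      descPochhammer R r * X ^ j := by
  induction j with
  | zero => simp [rStirling2_self]
  | succ j ih =>
    have hX (m : ℕ) : descPochhammer R m * X =
        descPochhammer R (m + 1) + (m : R) • descPochhammer R m := by
      rw [descPochhammer_succ_right, smul_eq_C_mul, map_natCast]
      ring
    set g : ℕ → R[X] := fun m => ((m : R) * rStirling2 r (r + j) m) • descPochhammer R m
    have hg : ∑ m ∈ range (r + j + 1), g (m + 1) = ∑ m ∈ range (r + j + 1), g m := by
      have hgN : g (r + j + 1) = 0 := by simp [g, rStirling2_eq_zero_of_lt (Nat.lt_succ_self _)]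
      have hg0 : g 0 = 0 := by simp [g]
      have := (sum_range_succ' g (r + j + 1)).symm.trans (sum_range_succ g (r + j + 1))
      rwa [hgN, hg0, add_zero, add_zero] at this
    simp only [g, Nat.cast_succ] at hg
    rw [pow_succ, ← mul_assoc, ← ih, sum_mul, ← add_assoc, sum_range_succ',
      rStirling2_succ_zero (by omega), Nat.cast_zero, zero_smul, add_zero]
    simp only [smul_mul_assoc, hX, smul_add, sum_add_distrib, smul_smul,
      rStirling2_succ_succ (Nat.le_add_right r j)]
    push_cast
    simp only [add_smul, sum_add_distrib, hg, mul_comm]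
    rw [add_comm]

theorem sum_rStirling2_smul_descPochhammer_succ (r j : ℕ) :
    ∑ m ∈ range (r + j + 1), (rStirling2 r (r + j) m : R) • descPochhammer R (m + 1) =
      descPochhammer R (r + 1) * (X - 1) ^ j := by
  calc _ = X * (∑ m ∈ range (r + j + 1),
          (rStirling2 r (r + j) m : R) • descPochhammer R m).comp (X - 1) := by
        simp only [descPochhammer_succ_left, Polynomial.sum_comp, smul_comp, mul_sum,
          mul_smul_comm]
    _ = _ := by
      rw [sum_rStirling2_smul_descPochhammer, mul_comp, X_pow_comp, ← mul_assoc,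
        ← descPochhammer_succ_left]

theorem X_sub_one_dvd_descPochhammer {m : ℕ} (hm : 2 ≤ m) :
    X - C 1 ∣ descPochhammer R m := by
  rw [dvd_iff_isRoot, IsRoot, ← Nat.cast_one, descPochhammer_eval_eq_descFactorial,
    Nat.descFactorial_eq_zero_iff_lt.mpr hm, Nat.cast_zero]

end descPochhammer

section derivativeMulX

variable {R : Type*} [CommSemiring R]

variable (R) in
noncomputable def derivativeMulX : Module.End R R[X] :=
  derivative ∘ₗ LinearMap.mulLeft R X

theorem derivativeMulX_apply (p : R[X]) : derivativeMulX R p = derivative (X * p) := rfl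

theorem derivativeMulX_pow_C_mul_X_pow (k ℓ : ℕ) (a : R) :
    (derivativeMulX R ^ k) (C a * X ^ ℓ) = C (a * (ℓ + 1) ^ k) * X ^ ℓ := by
  induction k with
  | zero => simp
  | succ k ih =>
    rw [pow_succ', Module.End.mul_apply, ih, derivativeMulX_apply, mul_left_comm, ← pow_succ',
      derivative_C_mul_X_pow, Nat.add_sub_cancel, pow_succ, Nat.cast_succ, mul_assoc]

theorem eval_one_derivativeMulX_pow (k : ℕ) (p : R[X]) :
    ((derivativeMulX R ^ k) p).eval 1 = ∑ i ∈ range (p.natDegree + 1), p.coeff i * (i + 1) ^ k := by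
  conv_lhs => rw [p.as_sum_range_C_mul_X_pow]
  simp [derivativeMulX_pow_C_mul_X_pow, eval_finsetSum]

theorem pow_sub_dvd_derivativeMulX_pow {p q : R[X]} {n : ℕ} (k : ℕ) (h : q ^ n ∣ p) :
    q ^ (n - k) ∣ (derivativeMulX R ^ k) p := by
  induction k with
  | zero => simpa
  | succ k ih =>
    rw [pow_succ', Module.End.mul_apply, derivativeMulX_apply, Nat.sub_succ]
    exact pow_sub_one_dvd_derivative_of_pow_dvd (dvd_mul_of_dvd_right ih X)

end derivativeMulX

theorem polyCauchy_neg_eq_eval_derivativeMulX_pow (k m : ℕ) :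
    polyCauchy (-(k : ℤ)) m = ((derivativeMulX ℝ ^ k) (descPochhammer ℝ m)).eval 1 := by
  rw [eval_one_derivativeMulX_pow, descPochhammer_natDegree, polyCauchy]
  refine sum_congr rfl fun ℓ _ => ?_
  rw [coeff_descPochhammer, stirling1_eq_stirlingFirst, zpow_neg, zpow_natCast, div_inv_eq_mul]

theorem stmt17 (n k : ℕ) (h : k + 2 ≤ n) :
    ∑ l ∈ Finset.range (k + 1),
        (rStirling2 (n - k - 1) (n - 1) (n - l - 1) : ℝ) * polyCauchy (-(k : ℤ)) (n - l) =
      0 := by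
  obtain ⟨r, rfl⟩ : ∃ r, n = r + 1 + k + 1 := ⟨n - k - 2, by omega⟩
  set f : ℕ → ℝ := fun m => rStirling2 (r + 1) (r + 1 + k) m * polyCauchy (-(k : ℤ)) (m + 1)
  have hdvd : (X - C 1) ^ (k + 1) ∣ descPochhammer ℝ (r + 2) * (X - 1) ^ k := by
    rw [pow_succ', ← C_1]
    exact mul_dvd_mul (X_sub_one_dvd_descPochhammer (by omega)) dvd_rfl
  calc _ = ∑ m ∈ range (r + 1 + k + 1), f m := by
        rw [← sum_range_reflect f]
        refine (sum_congr rfl fun l hl => ?_).trans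
          (sum_subset (range_subset_range.mpr (by omega)) fun l _ hl => ?_)
        · have hl' : l < k + 1 := mem_range.mp hl
          simp only [f]
          congr 3 <;> omega
        · have hl' : k + 1 ≤ l := by simpa using hl
          simp only [f]
          rw [rStirling2_eq_zero_of_right_lt (by omega), Nat.cast_zero, zero_mul]
    _ = ((derivativeMulX ℝ ^ k) (descPochhammer ℝ (r + 2) * (X - 1) ^ k)).eval 1 := by
        simp only [f, polyCauchy_neg_eq_eval_derivativeMulX_pow, ← smul_eq_mul, ← eval_smul,
          ← map_smul, ← eval_finsetSum, ← map_sum, sum_rStirling2_smul_descPochhammer_succ]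
    _ = 0 := by
        rw [← IsRoot, ← dvd_iff_isRoot]
        simpa using pow_sub_dvd_derivativeMulX_pow k hdvd
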